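/- arXiv:1009.1199 — 4 statements merged into one kernel-verified Lean document; each statement's English description precedes it below -/
import Mathlib

section
/- Let U, V, W be finite-dimensional complex vector spaces with dim U = m, let j be a natural number with j ≤ m − 1, and let r ≥ 1. Given u₁, …, u_r ∈ U*, v₁, …, v_r ∈ V*, w₁, …, w_r ∈ W*, let ψ : V ⊗ ⋀ʲ U* → W* ⊗ ⋀ʲ⁺¹ U* be the unique linear map satisfying ψ(v ⊗ ω) = Σ_{i=1}^r v_i(v) • (w_i ⊗ (u_i ∧ ω)) for all v ∈ V and ω ∈ ⋀ʲ U*. Then the rank of ψ is at most r · (m−1 choose j). -/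
/-!
Write `ψ = ∑ i ψᵢ` with `ψᵢ (x ⊗ ω) = vᵢ x • (wᵢ ⊗ uᵢ ∧ ω)`. Each `ψᵢ` factors through
`u ∧ · : ⋀ʲ M → ⋀ʲ⁺¹ M` (here `u = uᵢ`, `M = U*`), whose rank is at most `(m-1 choose j)`:
if `q` is a complement of `K ∙ u` and `p : M → M` the projection onto `q` along `K ∙ u`, then
`u ∧ ω = u ∧ (⋀ʲ p) ω`, since `x - p x ∈ K ∙ u` and `u ∧ u = 0`, so `u ∧ ·` factors through
`⋀ʲ q`, of dimension `(m-1 choose j)`.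
-/

open scoped TensorProduct

/-- Left exterior multiplication by `u : M`, as a linear map `⋀ʲ M → ⋀ʲ⁺¹ M`. -/
noncomputable def wedgeMap {R : Type*} [CommRing R] {M : Type*} [AddCommGroup M] [Module R M]
    (j : ℕ) (u : M) : ⋀[R]^j M →ₗ[R] ⋀[R]^(j + 1) M :=
  LinearMap.restrict (LinearMap.mulLeft R (ExteriorAlgebra.ι R u))
    (fun x hx => by
      show ExteriorAlgebra.ι R u * x ∈
        LinearMap.range (ExteriorAlgebra.ι R : M →ₗ[R] ExteriorAlgebra R M) ^ (j + 1)
      rw [pow_succ']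
      exact Submodule.mul_mem_mul (LinearMap.mem_range_self _ u) hx)

namespace AlternatingMap

variable {R M N : Type*} [CommRing R] [AddCommGroup M] [Module R M] [AddCommGroup N] [Module R N]
  {n : ℕ}

theorem map_cons_eq_zero_of_mem_span_singleton (g : M [⋀^Fin (n + 1)]→ₗ[R] N) (u : M)
    {z : Fin n → M} {i : Fin n} (hi : z i ∈ R ∙ u) : g (Fin.cons u z) = 0 := by
  classical
  obtain ⟨c, hc⟩ := Submodule.mem_span_singleton.mp hi
  set v : Fin (n + 1) → M := Fin.cons u z
  calc g v = g (Function.update v i.succ (c • v 0)) := by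
        rw [Function.update_eq_self_iff.mpr]; simpa [v] using hc
    _ = 0 := by rw [g.map_update_smul, g.map_update_self _ (Fin.succ_ne_zero i), smul_zero]

theorem map_cons_eq_of_sub_mem_span_singleton (g : M [⋀^Fin (n + 1)]→ₗ[R] N) (u : M)
    {x y : Fin n → M} (h : ∀ i, x i - y i ∈ R ∙ u) : g (Fin.cons u x) = g (Fin.cons u y) := by
  classical
  -- Expanding `x = y + (x - y)` multilinearly, every term but `g (cons u y)` repeats `u`.
  have hsum := (g.curryLeft u).map_add_univ y (x - y)
  rw [add_sub_cancel, Finset.sum_eq_single Finset.univ, Finset.piecewise_univ] at hsum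
  · exact hsum
  · intro s _ hs
    obtain ⟨i, hi⟩ := not_forall.mp (mt Finset.eq_univ_of_forall hs)
    exact g.map_cons_eq_zero_of_mem_span_singleton u
      (i := i) (by rw [Finset.piecewise_eq_of_notMem _ _ _ hi]; exact h i)
  · exact fun h => (h (Finset.mem_univ _)).elim

end AlternatingMap

section wedgeMap

variable {R M : Type*} [CommRing R] [AddCommGroup M] [Module R M]

theorem coe_wedgeMap_ιMulti (j : ℕ) (u : M) (x : Fin j → M) :
    (wedgeMap j u (exteriorPower.ιMulti R j x) : ExteriorAlgebra R M) =
      ExteriorAlgebra.ιMulti R (j + 1) (Fin.cons u x) := by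
  rw [ExteriorAlgebra.ιMulti_succ_apply]
  rfl

@[simp]
theorem wedgeMap_zero (j : ℕ) : wedgeMap (R := R) j (0 : M) = 0 := by
  ext x
  simp [wedgeMap]

theorem wedgeMap_comp_map_of_sub_mem_span_singleton (j : ℕ) (u : M) {f : M →ₗ[R] M}
    (hf : ∀ x, x - f x ∈ R ∙ u) : wedgeMap j u ∘ₗ exteriorPower.map j f = wedgeMap j u := by
  ext x
  simp only [LinearMap.compAlternatingMap_apply, LinearMap.comp_apply,
    exteriorPower.map_apply_ιMulti, coe_wedgeMap_ιMulti]
  exact ExteriorAlgebra.ιMulti R (j + 1) |>.map_cons_eq_of_sub_mem_span_singleton u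
    fun i => by simpa [neg_sub] using (R ∙ u).neg_mem (hf (x i))

theorem rank_wedgeMap_le {K : Type*} [Field K] [Module K M] [FiniteDimensional K M]
    (j : ℕ) (u : M) : (wedgeMap (R := K) j u).rank ≤ ((Module.finrank K M - 1).choose j : ℕ) := by
  rcases eq_or_ne u 0 with rfl | hu
  · simp
  obtain ⟨q, hq⟩ := (K ∙ u).exists_isCompl
  have hq_finrank : Module.finrank K q = Module.finrank K M - 1 := by
    have := Submodule.finrank_add_eq_of_isCompl hq
    rw [finrank_span_singleton hu] at this
    omega
  have hfactor : wedgeMap j u = (wedgeMap j u ∘ₗ exteriorPower.map j q.subtype) ∘ₗ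
      exteriorPower.map j (q.projectionOnto (K ∙ u) hq.symm) := by
    rw [LinearMap.comp_assoc, ← exteriorPower.map_comp]
    exact (wedgeMap_comp_map_of_sub_mem_span_singleton j u
      (Submodule.sub_projection_mem hq.symm)).symm
  calc (wedgeMap j u).rank ≤ (exteriorPower.map j (q.projectionOnto (K ∙ u) hq.symm)).rank := by
        rw [hfactor]; exact LinearMap.rank_comp_le_right _ _
    _ ≤ Module.rank K (⋀[K]^j q) := LinearMap.rank_le_range _
    _ = _ := by rw [← Module.finrank_eq_rank, exteriorPower.finrank_eq, hq_finrank]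

end wedgeMap

section RankOne

variable {K M V N : Type*} [Field K] [AddCommGroup M] [Module K M] [AddCommGroup V] [Module K V]
  [AddCommGroup N] [Module K N]

noncomputable def exteriorFlatteningRankOne (j : ℕ) (u : M) (φ : Module.Dual K V) (a : N) :
    V ⊗[K] ⋀[K]^j M →ₗ[K] N ⊗[K] ⋀[K]^(j + 1) M :=
  (TensorProduct.mk K N _ a ∘ₗ wedgeMap j u) ∘ₗ (TensorProduct.lid K _).toLinearMap ∘ₗ
    LinearMap.rTensor _ φ

@[simp]
theorem exteriorFlatteningRankOne_tmul (j : ℕ) (u : M) (φ : Module.Dual K V) (a : N) (x : V)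
    (ω : ⋀[K]^j M) :
    exteriorFlatteningRankOne j u φ a (x ⊗ₜ ω) = φ x • (a ⊗ₜ wedgeMap j u ω) := by
  simp [exteriorFlatteningRankOne]

theorem rank_exteriorFlatteningRankOne_le [FiniteDimensional K M] (j : ℕ) (u : M)
    (φ : Module.Dual K V) (a : N) :
    (exteriorFlatteningRankOne j u φ a).rank ≤ ((Module.finrank K M - 1).choose j : ℕ) := by
  refine (LinearMap.rank_comp_le_left _ _).trans <| Cardinal.lift_le_nat_iff.mp <|
    (LinearMap.lift_rank_comp_le_right _ _).trans ?_
  exact Cardinal.lift_le_nat_iff.mpr (rank_wedgeMap_le j u)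

end RankOne

theorem rank_exteriorFlattening_le_general (m r : ℕ) (j : ℕ)
    (U V W : Type*) [AddCommGroup U] [Module ℂ U] [FiniteDimensional ℂ U]
    [AddCommGroup V] [Module ℂ V]
    [AddCommGroup W] [Module ℂ W]
    (hU : Module.finrank ℂ U = m)
    (u : Fin r → Module.Dual ℂ U) (v : Fin r → Module.Dual ℂ V) (w : Fin r → Module.Dual ℂ W)
    (ψ : V ⊗[ℂ] ⋀[ℂ]^j (Module.Dual ℂ U) →ₗ[ℂ]
      Module.Dual ℂ W ⊗[ℂ] ⋀[ℂ]^(j + 1) (Module.Dual ℂ U))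
    (hψ : ∀ (x : V) (ω : ⋀[ℂ]^j (Module.Dual ℂ U)),
      ψ (x ⊗ₜ[ℂ] ω) = ∑ i, v i x • (w i ⊗ₜ[ℂ] wedgeMap j (u i) ω)) :
    Module.rank ℂ (LinearMap.range ψ) ≤ (r * (m - 1).choose j : ℕ) := by
  have hψ_sum : ψ = ∑ i, exteriorFlatteningRankOne j (u i) (v i) (w i) :=
    TensorProduct.ext' fun x ω => by simp [hψ]
  have hdual : Module.finrank ℂ (Module.Dual ℂ U) = m := by
    rw [Subspace.dual_finrank_eq, hU]
  calc ψ.rank ≤ ∑ i, (exteriorFlatteningRankOne j (u i) (v i) (w i)).rank := by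
        rw [hψ_sum]; exact LinearMap.rank_finsetSum_le _ _
    _ ≤ ∑ _i : Fin r, (((m - 1).choose j : ℕ) : Cardinal) := by
        gcongr with i
        exact hdual ▸ rank_exteriorFlatteningRankOne_le j (u i) (v i) (w i)
    _ = _ := by simp

/-- If `ψ : V ⊗ ⋀ʲ U* → W* ⊗ ⋀ʲ⁺¹ U*` is the exterior flattening of the tensor
`x = ∑ i, u i ⊗ v i ⊗ w i` (a tensor of rank at most `r`), then the rank of `ψ`
(the dimension of its image) is at most `r * ((m-1).choose j)`. -/
theorem rank_exteriorFlattening_le (m r : ℕ) (hm : 1 ≤ m) (hr : 1 ≤ r) (j : ℕ) (hj : j ≤ m - 1)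
    (U V W : Type*) [AddCommGroup U] [Module ℂ U] [FiniteDimensional ℂ U]
    [AddCommGroup V] [Module ℂ V] [FiniteDimensional ℂ V]
    [AddCommGroup W] [Module ℂ W] [FiniteDimensional ℂ W]
    (hU : Module.finrank ℂ U = m)
    (u : Fin r → Module.Dual ℂ U) (v : Fin r → Module.Dual ℂ V) (w : Fin r → Module.Dual ℂ W)
    (ψ : V ⊗[ℂ] ⋀[ℂ]^j (Module.Dual ℂ U) →ₗ[ℂ]
      Module.Dual ℂ W ⊗[ℂ] ⋀[ℂ]^(j + 1) (Module.Dual ℂ U))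
    (hψ : ∀ (x : V) (ω : ⋀[ℂ]^j (Module.Dual ℂ U)),
      ψ (x ⊗ₜ[ℂ] ω) = ∑ i, v i x • (w i ⊗ₜ[ℂ] wedgeMap j (u i) ω)) :
    Module.rank ℂ (LinearMap.range ψ) ≤ (r * (m - 1).choose j : ℕ) :=
  rank_exteriorFlattening_le_general m r j U V W hU u v w ψ hψ
end

section
/- Let B and C be n×n complex matrices, and let I denote the n×n identity matrix. Then the rank of the 3n×3n block matrix [[0, I, −B], [−I, 0, C], [B, −C, 0]] equals 2n + rank(B·C − C·B). In particular, this matrix has rank at most 2n if and only if B and C commute. -/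
/-!
Grouping the first two block rows and columns of `M(C, B, I)` exhibits it as a `2 × 2` block
matrix whose upper-left `2n × 2n` block `[[0, I], [−I, 0]]` is invertible and whose lower-right
`n × n` block is zero. The rank of a block matrix with invertible upper-left block `A` is
`rank A + rank (D − C A⁻¹ B)` (eliminate the off-diagonal blocks), and here the Schur complement
`D − C A⁻¹ B` is exactly the commutator `B C − C B`.
-/

/-- The `3n × 3n` block matrix `M(A₁,A₂,A₃) = [[0, A₃, −A₂], [−A₃, 0, A₁], [A₂, −A₁, 0]]`. -/
def Mmat {n : ℕ} (A₁ A₂ A₃ : Matrix (Fin n) (Fin n) ℂ) :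
    Matrix (Fin 3 × Fin n) (Fin 3 × Fin n) ℂ :=
  Matrix.of fun p q => ![![0, A₃, -A₂], ![-A₃, 0, A₁], ![A₂, -A₁, 0]] p.1 q.1 p.2 q.2

open Matrix

theorem Submodule.finrank_prod {K V W : Type*} [Field K] [AddCommGroup V] [Module K V]
    [AddCommGroup W] [Module K W] [FiniteDimensional K V] [FiniteDimensional K W]
    (p : Submodule K V) (q : Submodule K W) :
    Module.finrank K (p.prod q) = Module.finrank K p + Module.finrank K q := by
  have hinj : Function.Injective (p.subtype.prodMap q.subtype) :=
    Prod.map_injective.mpr ⟨p.injective_subtype, q.injective_subtype⟩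
  rw [← Module.finrank_prod, ← LinearMap.finrank_range_of_inj hinj, LinearMap.range_prodMap,
    Submodule.range_subtype, Submodule.range_subtype]

namespace Matrix

theorem mulVecLin_fromBlocks_zero_zero {R l m n p : Type*} [CommSemiring R] [Fintype m]
    [Fintype n] (A : Matrix l m R) (D : Matrix p n R) :
    (fromBlocks A 0 0 D).mulVecLin =
      (LinearEquiv.sumArrowLequivProdArrow l p R R).symm.toLinearMap ∘ₗ
        A.mulVecLin.prodMap D.mulVecLin ∘ₗ
          (LinearEquiv.sumArrowLequivProdArrow m n R R).toLinearMap := by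
  ext x (i | i) <;> simp [fromBlocks_mulVec] <;> rfl

theorem rank_fromBlocks_zero_zero {K l m n p : Type*} [Field K] [Fintype l] [Fintype m]
    [Fintype n] [Fintype p] (A : Matrix l m K) (D : Matrix p n K) :
    (fromBlocks A 0 0 D).rank = A.rank + D.rank := by
  rw [rank, mulVecLin_fromBlocks_zero_zero, LinearMap.range_comp, LinearEquiv.finrank_map_eq,
    LinearMap.range_comp_of_range_eq_top _ (LinearEquiv.range _), LinearMap.range_prodMap,
    Submodule.finrank_prod]
  rfl

theorem rank_fromBlocks_of_invertible₁₁ {K l m n : Type*} [Field K] [Fintype l] [Fintype m]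
    [Fintype n] [DecidableEq m] (A : Matrix m m K) (B : Matrix m n K) (C : Matrix l m K)
    (D : Matrix l n K) [Invertible A] :
    (fromBlocks A B C D).rank = Fintype.card m + (D - C * ⅟A * B).rank := by
  classical
  have hL : IsUnit (fromBlocks 1 0 (C * ⅟A) 1 : Matrix (m ⊕ l) (m ⊕ l) K).det := by simp
  have hR : IsUnit (fromBlocks 1 (⅟A * B) 0 1 : Matrix (m ⊕ n) (m ⊕ n) K).det := by simp
  rw [fromBlocks_eq_of_invertible₁₁ A B C D, rank_mul_eq_left_of_isUnit_det _ _ hR,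
    rank_mul_eq_right_of_isUnit_det _ _ hL, rank_fromBlocks_zero_zero,
    rank_of_isUnit A (isUnit_of_invertible A)]

theorem rank_eq_zero_iff {K m n : Type*} [Field K] [Fintype n] (A : Matrix m n K) :
    A.rank = 0 ↔ A = 0 := by
  classical
  rw [rank, Submodule.finrank_eq_zero, LinearMap.range_eq_bot, ← toLin'_apply', ← map_zero toLin',
    toLin'.injective.eq_iff]

theorem zero_sub_fromCols_mul_fromBlocks_mul_fromRows {R m : Type*} [Ring R] [Fintype m]
    [DecidableEq m] (B C : Matrix m m R) :
    0 - fromCols B (-C) * (fromBlocks 0 (-1) 1 0 : Matrix (m ⊕ m) (m ⊕ m) R) * fromRows (-B) C =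
      B * C - C * B := by
  simp [fromCols_mul_fromBlocks, fromCols_mul_fromRows, sub_eq_add_neg]

end Matrix

def finThreeProdEquivSum (n : ℕ) : Fin 3 × Fin n ≃ (Fin n ⊕ Fin n) ⊕ Fin n where
  toFun p := ![Sum.inl ∘ Sum.inl, Sum.inl ∘ Sum.inr, Sum.inr] p.1 p.2
  invFun := Sum.elim (Sum.elim (Prod.mk 0) (Prod.mk 1)) (Prod.mk 2)
  left_inv := by rintro ⟨i, j⟩; fin_cases i <;> rfl
  right_inv := by rintro ((j | j) | j) <;> rfl

theorem Mmat_eq_submatrix_fromBlocks {n : ℕ} (A₁ A₂ A₃ : Matrix (Fin n) (Fin n) ℂ) :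
    Mmat A₁ A₂ A₃ = (fromBlocks (fromBlocks 0 A₃ (-A₃) 0) (fromRows (-A₂) A₁)
      (fromCols A₂ (-A₁)) 0).submatrix (finThreeProdEquivSum n) (finThreeProdEquivSum n) := by
  ext ⟨i, j⟩ ⟨k, l⟩
  fin_cases i <;> fin_cases k <;> rfl

/-- The rank of the `3n × 3n` block matrix `[[0, I, −B], [−I, 0, C], [B, −C, 0]]` equals
`2n + rank (B·C − C·B)`; in particular it is at most `2n` if and only if `B` and `C`
commute. -/
theorem rank_Mmat_one (n : ℕ) (B C : Matrix (Fin n) (Fin n) ℂ) :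
    (Mmat C B 1).rank = 2 * n + (B * C - C * B).rank ∧
      ((Mmat C B 1).rank ≤ 2 * n ↔ B * C = C * B) := by
  let : Invertible (fromBlocks 0 1 (-1) 0 : Matrix (Fin n ⊕ Fin n) (Fin n ⊕ Fin n) ℂ) :=
    ⟨fromBlocks 0 (-1) 1 0, by simp [fromBlocks_multiply, ← fromBlocks_one],
      by simp [fromBlocks_multiply, ← fromBlocks_one]⟩
  have hrank : (Mmat C B 1).rank = 2 * n + (B * C - C * B).rank := by
    rw [Mmat_eq_submatrix_fromBlocks, rank_submatrix, rank_fromBlocks_of_invertible₁₁,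
      Fintype.card_sum, Fintype.card_fin, ← two_mul]
    -- `⅟` of the instance above unfolds to `fromBlocks 0 (-1) 1 0`
    exact congrArg (2 * n + rank ·) (zero_sub_fromCols_mul_fromBlocks_mul_fromRows B C)
  refine ⟨hrank, ?_⟩
  rw [hrank, add_le_iff_nonpos_right, nonpos_iff_eq_zero, Matrix.rank_eq_zero_iff, sub_eq_zero]
end

section
/- Let A₁, …, A_m be symmetric n×n complex matrices and let n' ≤ n. The following are equivalent: (i) the rank of the n×(mn) block matrix [A₁ | A₂ | ⋯ | A_m] is at most n'; (ii) there exist an n×n' complex matrix P and symmetric n'×n' complex matrices B₁, …, B_m such that A_l = P · B_l · Pᵀ for every l = 1, …, m. -/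
/-!
If the column space `V` of `F = [A₁ | ⋯ | A_m]` has dimension at most `n'`, it factors through
`ℂ^{n'}`: there are `P : ℂ^{n'} → ℂⁿ` and `Q : ℂⁿ → ℂ^{n'}` with `P Q v = v` for `v ∈ V`.
Every `A_l` has its columns in `V`, so `P Q A_l = A_l`, and by symmetry also `A_l (P Q)ᵀ = A_l`;
hence `A_l = P (Q A_l Qᵀ) Pᵀ`. Conversely `A_l = P B_l Pᵀ` exhibits `F` as `P` times an
`n' × mn` matrix, so its rank is at most `n'`.
-/

open Matrix Module

theorem Submodule.exists_linearMap_comp_eq_on_of_finrank_le {K E : Type*} [Field K]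
    [AddCommGroup E] [Module K E] (V : Submodule K E) [FiniteDimensional K V] {r : ℕ}
    (h : finrank K V ≤ r) :
    ∃ (p : (Fin r → K) →ₗ[K] E) (q : E →ₗ[K] Fin r → K), ∀ v ∈ V, p (q v) = v := by
  obtain ⟨j, hj⟩ := (finrank_le_iff_exists_linearMap (R := K) (M := V) (M' := Fin r → K)).1
    (by rwa [finrank_fin_fun])
  obtain ⟨p, hp⟩ := j.exists_leftInverse_of_injective (LinearMap.ker_eq_bot.2 hj)
  obtain ⟨π, hπ⟩ := V.subtype.exists_leftInverse_of_injective V.ker_subtype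
  refine ⟨V.subtype ∘ₗ p, j ∘ₗ π, fun v hv => ?_⟩
  have hπv : π v = ⟨v, hv⟩ := LinearMap.congr_fun hπ ⟨v, hv⟩
  calc V.subtype (p (j (π v))) = V.subtype (π v) := by rw [← LinearMap.comp_apply p j, hp]; rfl
    _ = v := by rw [hπv]; rfl

theorem Matrix.exists_mul_mul_eq_self_of_rank_le {K m ι : Type*} [Field K] [Fintype m]
    [Fintype ι] (F : Matrix m ι K) {r : ℕ} (h : F.rank ≤ r) :
    ∃ (P : Matrix m (Fin r) K) (Q : Matrix (Fin r) m K), P * Q * F = F := by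
  classical
  obtain ⟨p, q, hpq⟩ := (LinearMap.range F.mulVecLin).exists_linearMap_comp_eq_on_of_finrank_le h
  refine ⟨LinearMap.toMatrix' p, LinearMap.toMatrix' q, toLin'.injective ?_⟩
  refine LinearMap.ext fun v => ?_
  simp only [toLin'_mul, LinearMap.comp_apply, toLin'_toMatrix']
  exact hpq _ (LinearMap.mem_range_self _ v)

theorem Matrix.IsSymm.mul_mul_transpose {α m n : Type*} [CommSemiring α] [Fintype n]
    {A : Matrix n n α} (hA : A.IsSymm) (P : Matrix m n α) :
    (P * A * Pᵀ).IsSymm := by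
  simp [IsSymm, transpose_mul, hA.eq, Matrix.mul_assoc]

theorem Matrix.IsSymm.eq_mul_mul_transpose_of_mul_mul_eq_self {α m n : Type*} [CommSemiring α]
    [Fintype m] [Fintype n] {A : Matrix n n α} (hA : A.IsSymm) {P : Matrix n m α}
    {Q : Matrix m n α} (hPQ : P * Q * A = A) : A = P * (Q * A * Qᵀ) * Pᵀ :=
  calc A = (P * Q * A)ᵀ := by rw [hPQ, hA.eq]
    _ = A * (P * Q)ᵀ := by rw [transpose_mul, hA.eq]
    _ = (P * Q * A) * (P * Q)ᵀ := by rw [hPQ]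
    _ = P * (Q * A * Qᵀ) * Pᵀ := by simp only [transpose_mul, Matrix.mul_assoc]

theorem rank_flattening_le_iff_subspace_general (m n n' : ℕ)
    (A : Fin m → Matrix (Fin n) (Fin n) ℂ) (hsym : ∀ l, (A l)ᵀ = A l) :
    (Matrix.of fun i (q : Fin m × Fin n) => A q.1 i q.2).rank ≤ n' ↔
      ∃ (P : Matrix (Fin n) (Fin n') ℂ) (B : Fin m → Matrix (Fin n') (Fin n') ℂ),
        (∀ l, (B l)ᵀ = B l) ∧ ∀ l, A l = P * B l * Pᵀ := by
  constructor
  · intro h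
    obtain ⟨P, Q, hPQ⟩ := exists_mul_mul_eq_self_of_rank_le _ h
    have hPQA : ∀ l, P * Q * A l = A l := fun l => by
      ext i j
      exact congr_fun (congr_fun hPQ i) (l, j)
    exact ⟨P, fun l => Q * A l * Qᵀ, fun l => IsSymm.mul_mul_transpose (hsym l) Q,
      fun l => IsSymm.eq_mul_mul_transpose_of_mul_mul_eq_self (hsym l) (hPQA l)⟩
  · rintro ⟨P, B, -, hAB⟩
    have hfactor : (Matrix.of fun i (q : Fin m × Fin n) => A q.1 i q.2) =
        P * Matrix.of fun j (q : Fin m × Fin n) => (B q.1 * Pᵀ) j q.2 := by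
      ext i q
      rw [of_apply, hAB q.1, Matrix.mul_assoc]
      rfl
    rw [hfactor]
    exact (rank_mul_le_left _ _).trans (rank_le_width P)

/-- Set-theoretic description of the subspace variety `Sub_{m,n'}`: for symmetric
matrices `A₁, …, A_m`, the flattening `[A₁ | ⋯ | A_m]` has rank at most `n'` if and only
if there are an `n × n'` matrix `P` and symmetric `n' × n'` matrices `B₁, …, B_m` with
`A_l = P · B_l · Pᵀ` for all `l`. -/
theorem rank_flattening_le_iff_subspace (m n n' : ℕ) (hn' : n' ≤ n)
    (A : Fin m → Matrix (Fin n) (Fin n) ℂ) (hsym : ∀ l, (A l)ᵀ = A l) :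
    (Matrix.of fun i (q : Fin m × Fin n) => A q.1 i q.2).rank ≤ n' ↔
      ∃ (P : Matrix (Fin n) (Fin n') ℂ) (B : Fin m → Matrix (Fin n') (Fin n') ℂ),
        (∀ l, (B l)ᵀ = B l) ∧ ∀ l, A l = P * B l * Pᵀ :=
  rank_flattening_le_iff_subspace_general m n n' A hsym
end

section
/- Let n = 4 and, for k = 1, 2, 3, let A_k be the symmetric 4×4 complex matrix whose (1, k+1) and (k+1, 1) entries are 1 and whose other entries are 0. Then: (i) the 4×12 block matrix F(A₁,A₂,A₃) = [A₁ | A₂ | A₃] has rank 4; (ii) the 12×12 block matrix M(A₁,A₂,A₃) = [[0, A₃, −A₂], [−A₃, 0, A₁], [A₂, −A₁, 0]] has rank 6; and (iii) the point of (Fin 3 × Sym2 (Fin 4) → ℂ) corresponding to (A₁,A₂,A₃) does not lie in MvPolynomial.zeroLocus (MvPolynomial.vanishingIdeal S₃), where S₃ is the set of points corresponding to triples of the form A_k = Σ_{i=1}^3 a⁽ⁱ⁾_k · v⁽ⁱ⁾ (v⁽ⁱ⁾)ᵀ with a⁽ⁱ⁾ ∈ ℂ³ and v⁽ⁱ⁾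 ∈ ℂ⁴. -/
open Matrix

/-- The `n × 3n` block matrix `F(A₁,A₂,A₃) = [A₁ | A₂ | A₃]`. -/
def Fmat {n : ℕ} (A₁ A₂ A₃ : Matrix (Fin n) (Fin n) ℂ) :
    Matrix (Fin n) (Fin 3 × Fin n) ℂ :=
  Matrix.of fun i q => ![A₁, A₂, A₃] q.1 i q.2

/-- The matrix `A_k(p)` of a point `p` parameterizing tuples of symmetric matrices. -/
def Amat {m n : ℕ} (p : Fin m × Sym2 (Fin n) → ℂ) (k : Fin m) : Matrix (Fin n) (Fin n) ℂ :=
  Matrix.of fun i j => p (k, s(i, j))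

/-- The point of `(Fin 3 × Sym2 (Fin 4) → ℂ)` corresponding to the triple of symmetric
`4 × 4` matrices `(A₁, A₂, A₃)` where `A_k` has `1` in the `(1, k+1)` and `(k+1, 1)`
entries and `0` elsewhere. -/
noncomputable def examplePoint : Fin 3 × Sym2 (Fin 4) → ℂ :=
  fun kq => if kq.2 = s((0 : Fin 4), kq.1.succ) then 1 else 0

/-!
Both ranks are certified by explicit submatrices: an identity submatrix bounds the rank from below,
and for `M` a factorization `M = M[:, C] * M[R, :]` through six columns bounds it from above.

At a point of `S₃`, `F = V * W` with the vectors `v⁽ⁱ⁾` as the columns of `V`, so `F` has rank at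
most `3` and every `4 × 4` minor of `F`, a polynomial in the point, vanishes on `S₃` and hence on
its Zariski closure. At `examplePoint`, however, column 2 of `A₁` and the first columns of `A₁`,
`A₂`, `A₃` form the identity matrix.
-/

open MvPolynomial

namespace Matrix

variable {k m n R : Type*} [Fintype k] [Fintype n]

theorem card_le_rank_of_submatrix_eq_one [CommSemiring R] [StrongRankCondition R]
    [DecidableEq k] {A : Matrix m n R} {r : k → m} {c : k → n} (h : A.submatrix r c = 1) :
    Fintype.card k ≤ A.rank := by
  simpa [h] using rank_submatrix_le A r c

theorem rank_le_card_of_eq_mul [CommSemiring R] [StrongRankCondition R] {A : Matrix m n R}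
    {B : Matrix m k R} {C : Matrix k n R} (h : A = B * C) : A.rank ≤ Fintype.card k :=
  h ▸ (rank_mul_le_right B C).trans (rank_le_card_height C)

theorem rank_eq_card_of_submatrix_eq_one [CommSemiring R] [StrongRankCondition R]
    [DecidableEq k] {A : Matrix m n R} {r : k → m} {c : k → n} (hsub : A.submatrix r c = 1)
    (hmul : A = A.submatrix id c * A.submatrix r id) : A.rank = Fintype.card k :=
  (rank_le_card_of_eq_mul hmul).antisymm (card_le_rank_of_submatrix_eq_one hsub)

theorem det_submatrix_eq_zero_of_rank_lt [CommRing R] [IsDomain R] [DecidableEq k]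
    (A : Matrix m n R) (r : k → m) (c : k → n) (h : A.rank < Fintype.card k) :
    (A.submatrix r c).det = 0 := by
  by_contra hdet
  exact (rank_of_det_ne_zero hdet ▸ rank_submatrix_le A r c).not_gt h

end Matrix

theorem Fmat_Amat_apply {n : ℕ} (p : Fin 3 × Sym2 (Fin n) → ℂ) (i : Fin n) (q : Fin 3 × Fin n) :
    Fmat (Amat p 0) (Amat p 1) (Amat p 2) i q = p (q.1, s(i, q.2)) := by
  obtain ⟨k, j⟩ := q
  fin_cases k <;> rfl

theorem rank_Fmat_Amat_le {n r : ℕ} {p : Fin 3 × Sym2 (Fin n) → ℂ} (a : Fin r → Fin 3 → ℂ)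
    (v : Fin r → Fin n → ℂ) (hp : ∀ k, Amat p k = ∑ i, a i k • vecMulVec (v i) (v i)) :
    (Fmat (Amat p 0) (Amat p 1) (Amat p 2)).rank ≤ r := by
  simpa using rank_le_card_of_eq_mul (B := of fun j i => v i j)
    (C := of fun i q => a i q.1 * v i q.2) <| by
      ext j q
      rw [Fmat_Amat_apply]
      change Amat p q.1 j q.2 = _
      simp [hp, mul_apply, Matrix.sum_apply, vecMulVec_apply, mul_left_comm]

noncomputable def fmatMinor {n : ℕ} (c : Fin n → Fin 3 × Fin n) :
    MvPolynomial (Fin 3 × Sym2 (Fin n)) ℂ :=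
  (of fun i j => X ((c j).1, s(i, (c j).2))).det

theorem eval_fmatMinor {n : ℕ} (c : Fin n → Fin 3 × Fin n) (p : Fin 3 × Sym2 (Fin n) → ℂ) :
    eval p (fmatMinor c) = ((Fmat (Amat p 0) (Amat p 1) (Amat p 2)).submatrix id c).det := by
  rw [fmatMinor, RingHom.map_det]
  congr 1
  ext i j
  simp [Fmat_Amat_apply]

theorem fmatMinor_mem_vanishingIdeal {n r : ℕ} (hr : r < n) (c : Fin n → Fin 3 × Fin n) :
    fmatMinor c ∈ vanishingIdeal ℂ {p : Fin 3 × Sym2 (Fin n) → ℂ |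
      ∃ (a : Fin r → Fin 3 → ℂ) (v : Fin r → Fin n → ℂ),
        ∀ k, Amat p k = ∑ i, a i k • vecMulVec (v i) (v i)} := by
  rintro p ⟨a, v, hp⟩
  rw [aeval_eq_eval, eval_fmatMinor]
  refine det_submatrix_eq_zero_of_rank_lt _ _ _ ?_
  simpa using (rank_Fmat_Amat_le a v hp).trans_lt hr

def exampleFColumns : Fin 4 → Fin 3 × Fin 4 := ![(0, 1), (0, 0), (1, 0), (2, 0)]

theorem Fmat_examplePoint_submatrix :
    (Fmat (Amat examplePoint 0) (Amat examplePoint 1) (Amat examplePoint 2)).submatrix id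
      exampleFColumns = 1 := by
  ext i j
  fin_cases i <;> fin_cases j <;>
    simp [Fmat_Amat_apply, examplePoint, exampleFColumns, one_apply]

/-- The blocks `A_k` of `examplePoint` over `ℤ`, where `decide` checks matrix identities. -/
def exampleBlockℤ (k : Fin 3) : Matrix (Fin 4) (Fin 4) ℤ :=
  of fun i j => if s(i, j) = s(0, k.succ) then 1 else 0

def exampleMmatℤ : Matrix (Fin 3 × Fin 4) (Fin 3 × Fin 4) ℤ :=
  of fun p q => ![![0, exampleBlockℤ 2, -exampleBlockℤ 1],
    ![-exampleBlockℤ 2, 0, exampleBlockℤ 0],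
    ![exampleBlockℤ 1, -exampleBlockℤ 0, 0]] p.1 q.1 p.2 q.2

theorem Amat_examplePoint (k : Fin 3) :
    Amat examplePoint k = (exampleBlockℤ k).map (Int.castRingHom ℂ) := by
  ext i j
  simp [Amat, examplePoint, exampleBlockℤ]

theorem Mmat_examplePoint :
    Mmat (Amat examplePoint 0) (Amat examplePoint 1) (Amat examplePoint 2) =
      exampleMmatℤ.map (Int.castRingHom ℂ) := by
  simp only [Amat_examplePoint]
  ext ⟨a, i⟩ ⟨b, j⟩
  revert a b
  simp [Fin.forall_fin_succ, Mmat, exampleMmatℤ]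

def exampleMRows : Fin 6 → Fin 3 × Fin 4 := ![(2, 2), (0, 3), (1, 1), (0, 0), (1, 0), (2, 0)]

def exampleMColumns : Fin 6 → Fin 3 × Fin 4 := ![(0, 0), (1, 0), (2, 0), (1, 3), (2, 1), (0, 2)]

theorem exampleMmatℤ_submatrix : exampleMmatℤ.submatrix exampleMRows exampleMColumns = 1 := by
  decide

theorem exampleMmatℤ_eq_mul : exampleMmatℤ =
    exampleMmatℤ.submatrix id exampleMColumns * exampleMmatℤ.submatrix exampleMRows id := by
  decide

theorem rank_Mmat_examplePoint :
    (Mmat (Amat examplePoint 0) (Amat examplePoint 1) (Amat examplePoint 2)).rank = 6 := by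
  rw [Mmat_examplePoint,
    rank_eq_card_of_submatrix_eq_one (r := exampleMRows) (c := exampleMColumns)
    (by rw [submatrix_map, exampleMmatℤ_submatrix, Matrix.map_one _ (map_zero _) (map_one _)])
    (by rw [submatrix_map, submatrix_map, ← Matrix.map_mul, ← exampleMmatℤ_eq_mul]),
    Fintype.card_fin]

/-- Example 5.4 (`ex:23`, last part): the tensor `x = ∑ i, e_i ⊗ (v₁ ⊗ v_{i+1} + v_{i+1} ⊗ v₁)`
satisfies `κ(x) = (4, 6, 4)`, so it satisfies the Pfaffian rank condition `κ₁ ≤ 6` but does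
not lie in the (cone over the) third secant variety of `ℙ² × ℙ³` embedded by `O(1,2)`. -/
theorem examplePoint_kappa_and_not_mem_secant :
    (Fmat (Amat examplePoint 0) (Amat examplePoint 1) (Amat examplePoint 2)).rank = 4 ∧
    (Mmat (Amat examplePoint 0) (Amat examplePoint 1) (Amat examplePoint 2)).rank = 6 ∧
    examplePoint ∉ MvPolynomial.zeroLocus ℂ (MvPolynomial.vanishingIdeal ℂ
      {p : Fin 3 × Sym2 (Fin 4) → ℂ |
        ∃ (a : Fin 3 → Fin 3 → ℂ) (v : Fin 3 → Fin 4 → ℂ),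
          ∀ k, Amat p k = ∑ i, a i k • Matrix.vecMulVec (v i) (v i)}) := by
  have hF := Fmat_examplePoint_submatrix
  refine ⟨?_, rank_Mmat_examplePoint, fun hmem => ?_⟩
  · simpa using
      rank_eq_card_of_submatrix_eq_one hF (by rw [hF, submatrix_id_id, Matrix.one_mul])
  · have h := mem_zeroLocus_iff.mp hmem _
      (fmatMinor_mem_vanishingIdeal (by norm_num) exampleFColumns)
    rw [aeval_eq_eval, eval_fmatMinor, hF, det_one] at h
    exact one_ne_zero h
end
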